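/- arXiv:cs/0008025 — 2 statements merged into one kernel-verified Lean document; each statement's English description precedes it below -/
import Mathlib

section
/- Let J be the relation on ℤ × ℤ where J (a,b) (c,d) holds if and only if (c,d) is one of (a+2,b), (a−2,b), (a,b+2), (a,b−2). For any starting cell (x,y) and any natural numbers m, n, the set of cells (x',y') with 0 ≤ x' < m and 0 ≤ y' < n that are reachable from (x,y) under the reflexive-transitive closure of J has cardinality at most ⌈m/2⌉ · ⌈n/2⌉, i.e., at most ((m+1)/2) · ((n+1)/2) using natural number division. Thus at most one fourth of an m × n board's cells can be reached by jumps of a given piece. -/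
/-- The jump relation on ℤ × ℤ: a single orthogonal jump moves a piece by
exactly two units in one coordinate. -/
def JumpRel : ℤ × ℤ → ℤ × ℤ → Prop := fun p q =>
  q = (p.1 + 2, p.2) ∨ q = (p.1 - 2, p.2) ∨ q = (p.1, p.2 + 2) ∨ q = (p.1, p.2 - 2)

lemma jump_parity {x y : ℤ} {p : ℤ × ℤ}
    (h : Relation.ReflTransGen JumpRel (x, y) p) :
    p.1 % 2 = x % 2 ∧ p.2 % 2 = y % 2 := by
  induction h with
  | refl => exact ⟨rfl, rfl⟩
  | tail _ hstep ih =>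
    rcases hstep with h | h | h | h <;> subst h <;> simp <;> omega

theorem reachable_cells_card_le (x y : ℤ) (m n : ℕ) :
    {p : ℤ × ℤ | 0 ≤ p.1 ∧ p.1 < (m : ℤ) ∧ 0 ≤ p.2 ∧ p.2 < (n : ℤ) ∧
        Relation.ReflTransGen JumpRel (x, y) p}.ncard
      ≤ ((m + 1) / 2) * ((n + 1) / 2) := by
  classical
  set S := {p : ℤ × ℤ | 0 ≤ p.1 ∧ p.1 < (m : ℤ) ∧ 0 ≤ p.2 ∧ p.2 < (n : ℤ) ∧
      Relation.ReflTransGen JumpRel (x, y) p}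
  set T : Set (ℕ × ℕ) :=
    ↑(Finset.range ((m + 1) / 2) ×ˢ Finset.range ((n + 1) / 2))
  have hmap : ∀ p ∈ S, (p.1.toNat / 2, p.2.toNat / 2) ∈ T := by
    rintro ⟨a, b⟩ ⟨ha0, ham, hb0, hbn, _⟩
    simp only [T, Finset.coe_product, Set.mem_prod, Finset.mem_coe,
      Finset.mem_range]
    constructor <;> omega
  have hinj : Set.InjOn (fun p : ℤ × ℤ => (p.1.toNat / 2, p.2.toNat / 2)) S := by
    rintro ⟨a, b⟩ ⟨ha0, _, hb0, _, hr⟩ ⟨c, d⟩ ⟨hc0, _, hd0, _, hr'⟩ h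
    obtain ⟨h1, h2⟩ := jump_parity hr
    obtain ⟨h3, h4⟩ := jump_parity hr'
    simp only [Prod.mk.injEq] at h ⊢
    obtain ⟨he, hf⟩ := h
    constructor <;> omega
  have := Set.ncard_le_ncard_of_injOn _ hmap hinj (Finset.finite_toSet _)
  calc S.ncard ≤ T.ncard := this
    _ = ((m + 1) / 2) * ((n + 1) / 2) := by
        simp only [T, Set.ncard_coe_finset, Finset.card_product, Finset.card_range]
end

section
/- Let G be a connected simple graph on a finite vertex type V and let p be a vertex of G. Then there exists a vertex v and an Eulerian walk in G from p to v (a walk starting at p that traverses every edge of G exactly once) if and only if at most one vertex of G other than p has odd degree, i.e., the set {w : V | w ≠ p and the degree of w in G is odd} has cardinality at most 1. -/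
/-! Necessity is Mathlib's `Walk.IsEulerian.even_degree_iff`. For sufficiency, the handshake
lemma turns "at most one odd vertex besides `p`" into the parity pattern of a trail from `p` to
some `x`. Take a longest trail `t` from `p`: every edge at its end is used, which forces the end
to be `x` and leaves all degrees even once the edges of `t` are deleted. If `t` missed an edge,
connectivity would give an unused edge at some vertex `a` of `t`; a longest trail from `a` among
the unused edges is then closed and nonempty, and splicing it into `t` at `a` gives a longer
trail. -/

open Finset

namespace SimpleGraph

variable {V : Type*} {G : SimpleGraph V}

namespace Walk

variable {u v : V}

instance (t : G.Walk u v) [DecidableEq V] : DecidablePred (· ∈ t.edgeSet) :=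
  fun e ↦ inferInstanceAs (Decidable (e ∈ t.edges))

lemma exists_isTrail_forall_isTrail_length_le [Finite G.edgeSet] (u : V) :
    ∃ (v : V) (t : G.Walk u v), t.IsTrail ∧
      ∀ (v' : V) (t' : G.Walk u v'), t'.IsTrail → t'.length ≤ t.length := by
  have := Fintype.ofFinite G.edgeSet
  let s := {n | ∃ (v : V) (t : G.Walk u v), t.IsTrail ∧ t.length = n}
  have : s.Finite := Set.Finite.subset (Set.finite_le_nat G.edgeFinset.card)
    fun n ⟨_, _, ht, hn⟩ ↦ hn ▸ ht.length_le_card_edgeFinset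
  obtain ⟨_, ⟨v, t, ht, rfl⟩, hmax⟩ := this.exists_maximal ⟨0, u, nil, by simp⟩
  exact ⟨v, t, ht, fun v' t' ht' ↦ by have := hmax ⟨v', t', ht', rfl⟩; lia⟩

lemma IsTrail.concat {w : V} {t : G.Walk u v} (ht : t.IsTrail) (h : G.Adj v w)
    (hvw : s(v, w) ∉ t.edges) : (t.concat h).IsTrail := by
  rw [isTrail_def, edges_concat, List.concat_eq_append, List.nodup_append]
  refine ⟨ht.edges_nodup, List.nodup_singleton _, ?_⟩
  simp only [List.mem_singleton]
  rintro e he _ rfl rfl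
  exact hvw he

variable [DecidableEq V]

lemma IsTrail.exists_isTrail_length_eq_add {t : G.Walk u v} (ht : t.IsTrail) {a : V}
    (ha : a ∈ t.support) {c : (G.deleteEdges t.edgeSet).Walk a a} (hc : c.IsTrail) :
    ∃ t' : G.Walk u v, t'.IsTrail ∧ t'.length = t.length + c.length := by
  have hspec := t.take_spec ha
  let c' := c.mapLe (deleteEdges_le _)
  refine ⟨(t.takeUntil a ha).append (c'.append (t.dropUntil a ha)), ?_, ?_⟩
  · have hedges := congrArg edges hspec
    rw [edges_append] at hedges
    have hperm : List.Perm ((t.takeUntil a ha).edges ++ (c'.edges ++ (t.dropUntil a ha).edges))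
        (c'.edges ++ t.edges) := by
      rw [← hedges]; exact List.perm_append_comm_assoc _ _ _
    rw [isTrail_def, edges_append, edges_append, hperm.nodup_iff, List.nodup_append,
      edges_mapLe_eq_edges]
    refine ⟨hc.edges_nodup, ht.edges_nodup, ?_⟩
    rintro e he _ he' rfl
    have := c.edges_subset_edgeSet he
    rw [edgeSet_deleteEdges] at this
    exact this.2 he'
  · have hlen := congrArg length hspec
    rw [length_append] at hlen
    simp only [length_append, c', length_mapLe]
    lia

variable [Fintype V] [DecidableRel G.Adj]

lemma IsTrail.degree_deleteEdges_add_countP {t : G.Walk u v} (ht : t.IsTrail) (x : V) :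
    (G.deleteEdges t.edgeSet).degree x + t.edges.countP (x ∈ ·) = G.degree x := by
  rw [← card_incidenceFinset_eq_degree, ← card_incidenceFinset_eq_degree,
    incidenceFinset_eq_filter, incidenceFinset_eq_filter]
  have hcount : t.edges.countP (x ∈ ·) = #{e ∈ G.edgeFinset | x ∈ e ∧ e ∈ t.edges} := by
    rw [List.countP_eq_length_filter, ← List.toFinset_card_of_nodup (ht.edges_nodup.filter _)]
    congr 1
    ext e
    simp only [List.mem_toFinset, List.mem_filter, mem_filter, mem_edgeFinset, decide_eq_true_eq]
    exact ⟨fun h ↦ ⟨t.edges_subset_edgeSet h.1, h.2, h.1⟩, fun h ↦ ⟨h.2.2, h.2.1⟩⟩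
  rw [hcount, ← card_filter_add_card_filter_not (s := {e ∈ G.edgeFinset | x ∈ e})
    (p := (· ∉ t.edges)), filter_filter, filter_filter]
  simp only [not_not]
  congr 2
  ext e
  simp [and_assoc, and_comm]

lemma IsTrail.even_degree_iff_of_degree_deleteEdges_eq_zero {t : G.Walk u v} (ht : t.IsTrail)
    (hv : (G.deleteEdges t.edgeSet).degree v = 0) : Even (G.degree v) ↔ u = v := by
  rw [← ht.degree_deleteEdges_add_countP v, hv, zero_add, ht.even_countP_edges_iff]
  tauto

lemma IsTrail.even_degree_deleteEdges {t : G.Walk u v} (ht : t.IsTrail)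
    (hpar : ∀ x, Even (G.degree x) ↔ (u ≠ v → x ≠ u ∧ x ≠ v)) (x : V) :
    Even ((G.deleteEdges t.edgeSet).degree x) := by
  have h := hpar x
  rw [← ht.degree_deleteEdges_add_countP x, Nat.even_add, ht.even_countP_edges_iff] at h
  tauto

lemma IsTrail.degree_deleteEdges_eq_zero_of_forall_length_le {t : G.Walk u v} (ht : t.IsTrail)
    (hmax : ∀ (v' : V) (t' : G.Walk u v'), t'.IsTrail → t'.length ≤ t.length) :
    (G.deleteEdges t.edgeSet).degree v = 0 := by
  by_contra h
  obtain ⟨w, hvw⟩ := ((G.deleteEdges t.edgeSet).degree_pos_iff_exists_adj v).mp (by lia)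
  rw [deleteEdges_adj] at hvw
  have := hmax w _ (ht.concat hvw.1 hvw.2)
  simp at this

end Walk

lemma Preconnected.exists_mem_support_adj_notMem_edges (hG : G.Preconnected) {u v : V}
    (t : G.Walk u v) {e : Sym2 V} (he : e ∈ G.edgeSet) (het : e ∉ t.edges) :
    ∃ a ∈ t.support, ∃ b, G.Adj a b ∧ s(a, b) ∉ t.edges := by
  induction e using Sym2.ind with | _ c d
  by_cases hc : c ∈ t.support
  · exact ⟨c, hc, d, he, het⟩
  obtain ⟨w⟩ := hG u c
  obtain ⟨d, -, hd, hd'⟩ := w.exists_boundary_dart {x | x ∈ t.support} t.start_mem_support hc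
  exact ⟨d.fst, hd, d.snd, d.adj, fun h ↦ hd' (t.snd_mem_support_of_mem_edges h)⟩

variable [Fintype V] [DecidableEq V] [DecidableRel G.Adj]

theorem Preconnected.exists_isEulerian (hG : G.Preconnected) {u v : V}
    (hpar : ∀ x, Even (G.degree x) ↔ (u ≠ v → x ≠ u ∧ x ≠ v)) :
    ∃ t : G.Walk u v, t.IsEulerian := by
  obtain ⟨v', t, ht, hmax⟩ := Walk.exists_isTrail_forall_isTrail_length_le (G := G) u
  have hsat := ht.degree_deleteEdges_eq_zero_of_forall_length_le hmax
  obtain rfl : v = v' := by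
    have := ht.even_degree_iff_of_degree_deleteEdges_eq_zero hsat
    grind
  refine ⟨t, ht.isEulerian_of_forall_mem fun e he ↦ ?_⟩
  by_contra het
  obtain ⟨a, ha, b, hab, habt⟩ := hG.exists_mem_support_adj_notMem_edges t he het
  obtain ⟨a', c, hc, hcmax⟩ := Walk.exists_isTrail_forall_isTrail_length_le
    (G := G.deleteEdges t.edgeSet) a
  obtain rfl : a = a' := (hc.even_degree_iff_of_degree_deleteEdges_eq_zero
    (hc.degree_deleteEdges_eq_zero_of_forall_length_le hcmax)).mp
    (ht.even_degree_deleteEdges hpar a')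
  have hab' : (G.deleteEdges t.edgeSet).Adj a b := deleteEdges_adj.mpr ⟨hab, habt⟩
  have hc_pos : 1 ≤ c.length := hcmax b hab'.toWalk (Walk.IsPath.of_adj hab').isTrail
  obtain ⟨t', ht', hlen⟩ := ht.exists_isTrail_length_eq_add ha hc
  have := hmax v t' ht'
  lia

lemma Walk.IsEulerian.card_filter_odd_degree_ne_le_one {u v : V} {t : G.Walk u v}
    (ht : t.IsEulerian) : #{w | w ≠ u ∧ Odd (G.degree w)} ≤ 1 := by
  have hv : ∀ w ∈ ({w | w ≠ u ∧ Odd (G.degree w)} : Finset V), w = v := by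
    intro w hw
    rw [mem_filter, ← Nat.not_even_iff_odd, ht.even_degree_iff] at hw
    tauto
  exact card_le_one.mpr fun a ha b hb ↦ (hv a ha).trans (hv b hb).symm

lemma exists_even_degree_iff_of_card_filter_odd_degree_ne_le_one {u : V}
    (h : #{w | w ≠ u ∧ Odd (G.degree w)} ≤ 1) :
    ∃ v, ∀ x, Even (G.degree x) ↔ (u ≠ v → x ≠ u ∧ x ≠ v) := by
  by_cases hu : Even (G.degree u)
  · refine ⟨u, fun x ↦ iff_of_true ?_ (by tauto)⟩
    have hcard : #{w | Odd (G.degree w)} = #{w | w ≠ u ∧ Odd (G.degree w)} := congrArg card <|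
      filter_congr fun w _ ↦
        ⟨fun hw ↦ ⟨by rintro rfl; exact Nat.not_even_iff_odd.mpr hw hu, hw⟩, And.right⟩
    have hempty : univ.filter (fun w ↦ Odd (G.degree w)) = ∅ := by
      obtain ⟨k, hk⟩ := G.even_card_odd_degree_vertices
      rw [← card_eq_zero]
      lia
    exact Nat.not_odd_iff_even.mp fun hx ↦ filter_eq_empty_iff.mp hempty (mem_univ x) hx
  · obtain ⟨k, hk⟩ := G.odd_card_odd_degree_vertices_ne u (Nat.not_even_iff_odd.mp hu)
    obtain ⟨v, hv⟩ := card_eq_one.mp (show #{w | w ≠ u ∧ Odd (G.degree w)} = 1 by lia)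
    have hmem (x : V) : x ≠ u ∧ Odd (G.degree x) ↔ x = v := by
      simpa using congrArg (x ∈ ·) hv
    refine ⟨v, fun x ↦ ?_⟩
    have := (hmem v).mpr rfl
    rw [← Nat.not_odd_iff_even]
    grind [Nat.not_even_iff_odd]

end SimpleGraph

theorem eulerian_walk_from_iff {V : Type*} [Fintype V] [DecidableEq V]
    (G : SimpleGraph V) [DecidableRel G.Adj] (hG : G.Connected) (p : V) :
    (∃ (v : V) (w : G.Walk p v), w.IsEulerian) ↔
      (Finset.univ.filter (fun w : V => w ≠ p ∧ Odd (G.degree w))).card ≤ 1 := by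
  refine ⟨fun ⟨v, w, hw⟩ ↦ hw.card_filter_odd_degree_ne_le_one, fun h ↦ ?_⟩
  obtain ⟨v, hv⟩ := SimpleGraph.exists_even_degree_iff_of_card_filter_odd_degree_ne_le_one h
  obtain ⟨w, hw⟩ := hG.preconnected.exists_isEulerian hv
  exact ⟨v, w, hw⟩
end
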